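/- Let n ≥ 1 and let A_n denote the alternating group of even permutations of Fin n, acting on vectors in Fin n → ℝ by (σ·v) i = v (σ⁻¹ i). For all integer vectors λ, μ : Fin n → ℤ, ∫_{[0,1]^n} Ê_λ(x) · conj(Ê_μ(x)) dx = card {(σ, τ) ∈ A_n × A_n : σ·λ = τ·μ}, where the integral is with respect to Lebesgue measure on the unit cube {x : Fin n → ℝ, 0 ≤ x i ≤ 1 for all i} and λ, μ are regarded as real vectors. -/

import Mathlib

/-!
Expanding `Ê_λ · conj Ê_μ` gives a double sum over `Aₙ × Aₙ` of characters
`x ↦ exp (2πi ∑ᵢ (σλ - τμ) i · x i)` with integer frequencies. By Fubini such a character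
integrates over the unit cube to the product of its one-dimensional integrals, which is `1` when
the frequency vanishes and `0` otherwise, so the integral counts the pairs with `σλ = τμ`.
-/

open MeasureTheory Complex

/-- The normalized `E`-orbit function
`Ê_λ(x) = ∑_{σ ∈ Aₙ} exp(2πi ∑ᵢ λ(σ⁻¹ i) · x i)`. -/
noncomputable def Ehat (n : ℕ) (lam x : Fin n → ℝ) : ℂ :=
  ∑ σ : alternatingGroup (Fin n),
    Complex.exp (2 * (Real.pi : ℂ) * Complex.I *
      ((∑ i, lam ((σ : Equiv.Perm (Fin n))⁻¹ i) * x i : ℝ) : ℂ))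

theorem setIntegral_univ_pi_prod {ι : Type*} [Fintype ι] {E : ι → Type*}
    [∀ i, MeasureSpace (E i)] [∀ i, SigmaFinite (volume : Measure (E i))]
    {𝕜 : Type*} [RCLike 𝕜] (s : (i : ι) → Set (E i)) (f : (i : ι) → E i → 𝕜) :
    ∫ x in Set.univ.pi s, ∏ i, f i (x i) = ∏ i, ∫ t in s i, f i t := by
  rw [volume_pi, Measure.restrict_pi_pi, integral_fintype_prod_eq_prod]

theorem integral_Icc_exp_two_pi_I_int_mul (k : ℤ) :
    ∫ t in Set.Icc (0 : ℝ) 1, exp (2 * Real.pi * I * ((k * t : ℝ) : ℂ)) =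
      if k = 0 then 1 else 0 := by
  split_ifs with hk
  · simp [hk]
  have hc : 2 * Real.pi * I * k ≠ 0 := by simp [hk, Real.pi_ne_zero, I_ne_zero]
  rw [integral_Icc_eq_integral_Ioc, ← intervalIntegral.integral_of_le zero_le_one]
  simp_rw [ofReal_mul, ofReal_intCast, ← mul_assoc]
  rw [integral_exp_mul_complex hc]
  have hperiod : exp (2 * Real.pi * I * k) = 1 := by
    rw [mul_comm, exp_int_mul_two_pi_mul_I]
  simp [hperiod]

theorem integral_unitCube_exp_two_pi_I_int_inner {ι : Type*} [Fintype ι] (k : ι → ℤ) :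
    ∫ x in Set.univ.pi (fun _ : ι => Set.Icc (0 : ℝ) 1),
        exp (2 * Real.pi * I * ((∑ i, k i * x i : ℝ) : ℂ)) = if k = 0 then 1 else 0 := by
  simp_rw [ofReal_sum, Finset.mul_sum, exp_sum]
  rw [setIntegral_univ_pi_prod (fun _ => Set.Icc (0 : ℝ) 1)
    (fun i t => exp (2 * Real.pi * I * ((k i * t : ℝ) : ℂ)))]
  simp_rw [integral_Icc_exp_two_pi_I_int_mul, Finset.prod_boole, funext_iff]
  simp

theorem integrableOn_unitCube_exp_two_pi_I_inner {ι : Type*} [Fintype ι] (k : ι → ℝ) :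
    IntegrableOn (fun x : ι → ℝ => exp (2 * Real.pi * I * ((∑ i, k i * x i : ℝ) : ℂ)))
      (Set.univ.pi fun _ : ι => Set.Icc (0 : ℝ) 1) :=
  (Continuous.continuousOn (by fun_prop)).integrableOn_compact
    (isCompact_univ_pi fun _ => isCompact_Icc)

theorem exp_two_pi_I_mul_conj (a b : ℝ) :
    exp (2 * Real.pi * I * a) * (starRingEnd ℂ) (exp (2 * Real.pi * I * b)) =
      exp (2 * Real.pi * I * ((a - b : ℝ) : ℂ)) := by
  rw [← exp_conj, ← exp_add]
  simp only [map_mul, conj_I, map_ofNat, conj_ofReal, ofReal_sub]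
  ring_nf

theorem Ehat_mul_conj_Ehat (n : ℕ) (lam mu x : Fin n → ℝ) :
    Ehat n lam x * (starRingEnd ℂ) (Ehat n mu x) =
      ∑ σ : alternatingGroup (Fin n), ∑ τ : alternatingGroup (Fin n),
        exp (2 * Real.pi * I * ((∑ i, (lam ((σ : Equiv.Perm (Fin n))⁻¹ i) -
          mu ((τ : Equiv.Perm (Fin n))⁻¹ i)) * x i : ℝ) : ℂ)) := by
  simp_rw [Ehat, map_sum, Finset.sum_mul_sum, exp_two_pi_I_mul_conj, ← Finset.sum_sub_distrib,
    sub_mul]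

theorem sum_sum_boole_eq_ncard {α β R : Type*} [Fintype α] [Fintype β] [AddCommMonoidWithOne R]
    (p : α × β → Prop) [DecidablePred p] :
    ∑ a, ∑ b, (if p (a, b) then 1 else 0 : R) = ({x | p x}.ncard : R) := by
  rw [Set.ncard_eq_toFinset_card', Set.toFinset_ofPred, ← Fintype.sum_prod_type', Finset.sum_boole]

theorem Ehat_orthogonality_count (n : ℕ) (lam mu : Fin n → ℤ) :
    ∫ x in Set.univ.pi (fun _ : Fin n => Set.Icc (0 : ℝ) 1),
        Ehat n (fun i => (lam i : ℝ)) x *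
          (starRingEnd ℂ) (Ehat n (fun i => (mu i : ℝ)) x) =
      (({p : alternatingGroup (Fin n) × alternatingGroup (Fin n) |
          (fun i => lam ((p.1 : Equiv.Perm (Fin n))⁻¹ i)) =
            fun i => mu ((p.2 : Equiv.Perm (Fin n))⁻¹ i)}.ncard : ℕ) : ℂ) := by
  simp_rw [Ehat_mul_conj_Ehat, ← Int.cast_sub]
  rw [integral_finsetSum _ fun σ _ =>
    integrable_finsetSum _ fun τ _ => integrableOn_unitCube_exp_two_pi_I_inner _]
  refine (Finset.sum_congr rfl fun σ _ =>
    integral_finsetSum _ fun τ _ => integrableOn_unitCube_exp_two_pi_I_inner _).trans ?_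
  rw [← sum_sum_boole_eq_ncard]
  simp_rw [integral_unitCube_exp_two_pi_I_int_inner, funext_iff, Pi.zero_apply, sub_eq_zero]
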